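/- The explicit solution y(t) = r*² − κ√(4ε²+δ²)/(κ − exp(2√(4ε²+δ²)·t)) of y' = 2ε² − 2y(y−δ), with r*² = (δ+√(4ε²+δ²))/2 and κ = (r² − r*²)/(r² − r*² + √(4ε²+δ²)) chosen so that y(0) = r², satisfies: if 0 ≤ r² ≤ r*² then κ ≤ 0 and y(t) ≤ r*² for all t ≥ 0; if r² ≥ r*² then 0 ≤ κ ≤ 1 and y(t) ≤ r*² + (r² − r*²)·exp(−2√(4ε²+δ²)·t) for all t ≥ 0. -/

import Mathlib

/-!
With `c = √(4ε² + δ²)`, the right-hand side `2ε² − 2y(y − δ)` vanishes at `y = r*²` and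
at `y = r*² − c`, so `u = y − r*²` solves the logistic equation `u' = −2u(u + c)`, whose
solutions are `u(t) = −κc / (κ − e^{2ct})` with `u(0) = κc / (1 − κ)`. For `κ ≤ 0` numerator
and denominator are both nonpositive, so `u ≤ 0`. For `0 ≤ κ < 1` and `t ≥ 0` the denominator
satisfies `e^{2ct} − κ ≥ (1 − κ)e^{2ct}`, which gives `u(t) ≤ u(0)e^{−2ct}`.
-/

open Real

noncomputable def riccatiSolution (rs c κ t : ℝ) : ℝ :=
  rs - κ * c / (κ - exp (2 * c * t))

theorem riccatiSolution_zero (rs c κ : ℝ) :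
    riccatiSolution rs c κ 0 = rs + κ * c / (1 - κ) := by
  rw [riccatiSolution, mul_zero, exp_zero, ← neg_sub 1 κ, div_neg, sub_neg_eq_add]

theorem hasDerivAt_riccatiSolution (rs c κ : ℝ) {t : ℝ} (ht : κ ≠ exp (2 * c * t)) :
    HasDerivAt (riccatiSolution rs c κ)
      (-2 * (riccatiSolution rs c κ t - rs) * (riccatiSolution rs c κ t - rs + c)) t := by
  have hexp : HasDerivAt (fun s => exp (2 * c * s)) (exp (2 * c * t) * (2 * c)) t := by
    simpa using ((hasDerivAt_id t).const_mul (2 * c)).exp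
  have hden : κ - exp (2 * c * t) ≠ 0 := sub_ne_zero.2 ht
  refine (((hasDerivAt_const t (κ * c)).div ((hasDerivAt_const t κ).sub hexp) hden).const_sub
    rs).congr_deriv ?_
  simp only [riccatiSolution, Pi.sub_apply]
  field_simp
  ring

theorem riccatiSolution_le_of_nonpos (rs : ℝ) {c κ : ℝ} (hc : 0 ≤ c) (hκ : κ ≤ 0) (t : ℝ) :
    riccatiSolution rs c κ t ≤ rs := by
  have hden : κ - exp (2 * c * t) ≤ 0 := by linarith [exp_pos (2 * c * t)]
  have hfrac : 0 ≤ κ * c / (κ - exp (2 * c * t)) :=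
    div_nonneg_of_nonpos (mul_nonpos_of_nonpos_of_nonneg hκ hc) hden
  rw [riccatiSolution]
  linarith

theorem riccatiSolution_le_add_exp (rs : ℝ) {c κ t : ℝ} (hc : 0 ≤ c) (hκ₀ : 0 ≤ κ) (hκ₁ : κ < 1)
    (ht : 0 ≤ t) :
    riccatiSolution rs c κ t ≤ rs + κ * c / (1 - κ) * exp (-2 * c * t) := by
  set E := exp (2 * c * t)
  have hE : 1 ≤ E := one_le_exp (by positivity)
  have hinv : exp (-2 * c * t) = E⁻¹ := by rw [← exp_neg]; ring_nf
  have hden : (1 - κ) * E ≤ E - κ := by nlinarith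
  have hfrac : κ * c / (E - κ) ≤ κ * c / ((1 - κ) * E) :=
    div_le_div_of_nonneg_left (by positivity) (by nlinarith) hden
  calc riccatiSolution rs c κ t = rs + κ * c / (E - κ) := by
        rw [riccatiSolution, ← neg_sub E κ, div_neg, sub_neg_eq_add]
    _ ≤ rs + κ * c / ((1 - κ) * E) := by linarith
    _ = rs + κ * c / (1 - κ) * exp (-2 * c * t) := by
        rw [hinv, div_mul_eq_div_div, div_eq_mul_inv _ E]

theorem mul_div_one_sub_of_eq_div_add {K : Type*} [Field K] {a c κ : K} (hac : a + c ≠ 0)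
    (hc : c ≠ 0) (hκ : κ = a / (a + c)) : κ * c / (1 - κ) = a := by
  have hsub : 1 - κ = c / (a + c) := by rw [hκ]; field_simp; ring
  rw [hsub, hκ]
  field_simp

theorem hopf_riccati_explicit_solution_bounds
    (ε δ r : ℝ) (hε : 0 < ε) :
    let c : ℝ := Real.sqrt (4 * ε ^ 2 + δ ^ 2)
    let rs : ℝ := (δ + c) / 2
    let κ : ℝ := (r ^ 2 - rs) / (r ^ 2 - rs + c)
    let y : ℝ → ℝ := fun t => rs - κ * c / (κ - Real.exp (2 * c * t))
    y 0 = r ^ 2 ∧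
    (∀ t ≥ (0 : ℝ), HasDerivAt y (2 * ε ^ 2 - 2 * y t * (y t - δ)) t) ∧
    (r ^ 2 ≤ rs → κ ≤ 0 ∧ ∀ t ≥ (0 : ℝ), y t ≤ rs) ∧
    (rs ≤ r ^ 2 → 0 ≤ κ ∧ κ ≤ 1 ∧
      ∀ t ≥ (0 : ℝ), y t ≤ rs + (r ^ 2 - rs) * Real.exp (-2 * c * t)) := by
  intro c rs κ y
  have hc2 : c ^ 2 = 4 * ε ^ 2 + δ ^ 2 := sq_sqrt (by positivity)
  have hc : 0 < c := sqrt_pos.2 (by positivity)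
  have hδc : δ < c := by nlinarith
  have hrs : rs = (δ + c) / 2 := rfl
  have hden : 0 < r ^ 2 - rs + c := by nlinarith [sq_nonneg r]
  have hκ₁ : κ < 1 := (div_lt_one hden).2 (by linarith)
  have hoffset : κ * c / (1 - κ) = r ^ 2 - rs :=
    mul_div_one_sub_of_eq_div_add hden.ne' hc.ne' rfl
  refine ⟨?_, fun t ht => ?_, fun h => ?_, fun h => ?_⟩
  · show riccatiSolution rs c κ 0 = r ^ 2
    rw [riccatiSolution_zero, hoffset]
    ring
  · show HasDerivAt (riccatiSolution rs c κ)
      (2 * ε ^ 2 - 2 * riccatiSolution rs c κ t * (riccatiSolution rs c κ t - δ)) t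
    have hE : κ ≠ exp (2 * c * t) := (hκ₁.trans_le (one_le_exp (by positivity))).ne
    convert hasDerivAt_riccatiSolution rs c κ hE using 1
    rw [hrs]
    linear_combination -hc2 / 2
  · have hκ : κ ≤ 0 := div_nonpos_of_nonpos_of_nonneg (by linarith) hden.le
    exact ⟨hκ, fun t _ => riccatiSolution_le_of_nonpos rs hc.le hκ t⟩
  · have hκ₀ : 0 ≤ κ := div_nonneg (by linarith) hden.le
    refine ⟨hκ₀, hκ₁.le, fun t ht => ?_⟩
    rw [← hoffset]
    exact riccatiSolution_le_add_exp rs hc.le hκ₀ hκ₁ ht
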